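/- On any consistent preference domain in the variable-population housing market model, the TTC mechanism is consistent: for every economy ≻_{I'} and every nonempty J ⊆ I' such that the agents in I'∖J are assigned exactly the objects O_{I'∖J} by TTC, every agent i ∈ J receives the same object in the reduced economy (≻_j|_J)_{j∈J} as in ≻_{I'}. -/
import Mathlib


/- Variable-population housing market model (Shapley–Scarf). Agents and
objects are identified: `I` is the grand finite set of agents and object `i`
(the endowment of agent `i`) is identified with `i`. A market is a nonempty
`I' : Finset I`, whose object set `O_{I'}` is `I'` itself. A strict preference
on the objects `O_{I'}` is encoded as a strict linear order `r : I → I → Prop`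
supported on `I'` (`r a b` meaning "`a` is strictly preferred to `b`"); an
economy in market `I'` is a profile `R : I → I → I → Prop` with `R i` the
preference of agent `i` (only the components of agents `i ∈ I'` matter). A
mechanism assigns to every economy an assignment `I → I` (an allocation being
a bijection of `I'` onto itself). -/

open Finset

variable {I : Type*} [DecidableEq I]

/-- `r` is a strict preference (linear order) on the objects `O_{I'} = I'`. -/
def IsPrefOn (I' : Finset I) (r : I → I → Prop) : Prop :=
  (∀ a b, r a b → a ∈ I' ∧ b ∈ I') ∧
  (∀ a ∈ I', ∀ b ∈ I', a ≠ b → (r a b ∨ r b a)) ∧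
  (∀ a, ¬ r a a) ∧
  (∀ a b c, r a b → r b c → r a c)

/-- The restriction `≻|_J` of a preference to the objects `O_J = J`. -/
def restr (J : Finset I) (r : I → I → Prop) : I → I → Prop :=
  fun a b => r a b ∧ a ∈ J ∧ b ∈ J

/-- A (variable-population) preference domain: a set of preferences for every market. -/
abbrev Domain (I : Type*) := Finset I → Set (I → I → Prop)

/-- The domain is consistent: restrictions of admissible preferences are admissible. -/
def ConsistentDomain (D : Domain I) : Prop :=
  ∀ I' : Finset I, ∀ r ∈ D I', ∀ J : Finset I, J ⊆ I' → J.Nonempty → restr J r ∈ D J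

/-- The maximal element of `S` under the strict relation `r`
(`d` is a junk default, used only if no maximal element exists). -/
noncomputable def bestIn (r : I → I → Prop) (S : Finset I) (d : I) : I :=
  letI := Classical.dec (∃ m ∈ S, ∀ x ∈ S, x ≠ m → r m x)
  if h : ∃ m ∈ S, ∀ x ∈ S, x ≠ m → r m x then h.choose else d

/-- The agents of `S` lying on a cycle of the pointing map `fun i => fav i S`. -/
def cyclicAgents (fav : I → Finset I → I) (S : Finset I) : Finset I :=
  S.filter fun i => ∃ k ∈ Finset.range S.card, (fun j => fav j S)^[k + 1] i = i

lemma cyclicAgents_subset (fav : I → Finset I → I) (S : Finset I) :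
    cyclicAgents fav S ⊆ S := Finset.filter_subset _ _

/-- The TTC procedure on the set `S` of remaining agents: every agent of `S`
lying on a pointing cycle receives the object owned by the agent he points to
and is removed; the procedure is then repeated on the remaining agents.
(Agents outside `S` keep their endowments; for pointing maps induced by
preferences a cycle always exists, so the `else` branch is never reached.) -/
def TTCaux (fav : I → Finset I → I) (S : Finset I) : I → I :=
  if hC : (cyclicAgents fav S).Nonempty then fun i =>
    if i ∈ cyclicAgents fav S then fav i S else TTCaux fav (S \ cyclicAgents fav S) i
  else id
termination_by S.card
decreasing_by
  exact Finset.card_lt_card (Finset.sdiff_ssubset (cyclicAgents_subset fav S) hC)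

/-- The Top Trading Cycles mechanism in market `I'` (each agent points at the
owner of his most preferred remaining object). -/
noncomputable def TTCv (I' : Finset I) (R : I → I → I → Prop) : I → I :=
  TTCaux (fun i S => bestIn (R i) S i) I'

/-- Local unanimity for variable populations: in every economy, whenever a
nonempty set `J` of agents admits a unanimously best suballocation `μ`
(a bijection of `J` onto `O_J = J` giving every member of `J` his most
preferred object of `O_{I'}`), the mechanism implements `μ` on `J`. -/
def LocallyUnanimousV (D : Domain I) (ψ : Finset I → (I → I → I → Prop) → I → I) : Prop :=
  ∀ I' : Finset I, I'.Nonempty → ∀ R : I → I → I → Prop, (∀ i ∈ I', R i ∈ D I') →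
    ∀ J : Finset I, J ⊆ I' → J.Nonempty → ∀ μ : I → I, Set.BijOn μ ↑J ↑J →
      (∀ i ∈ J, ∀ o ∈ I', o ≠ μ i → R i (μ i) o) →
      ∀ i ∈ J, ψ I' R i = μ i

/-- Consistency of a mechanism: if the agents of `I' ∖ J` are assigned exactly
their own endowments `O_{I' ∖ J}` and are removed, every remaining agent
receives the same object in the reduced economy on `J`. -/
def ConsistentMechV (D : Domain I) (ψ : Finset I → (I → I → I → Prop) → I → I) : Prop :=
  ∀ I' : Finset I, I'.Nonempty → ∀ R : I → I → I → Prop, (∀ i ∈ I', R i ∈ D I') →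
    ∀ J : Finset I, J ⊆ I' → J.Nonempty →
      (I' \ J).image (fun i => ψ I' R i) = I' \ J →
      ∀ i ∈ J, ψ J (fun j => restr J (R j)) i = ψ I' R i

/-! ### Auxiliary material for the proof -/

lemma exists_best {I' : Finset I} {r : I → I → Prop} (hr : IsPrefOn I' r) :
    ∀ {S : Finset I}, S.Nonempty → S ⊆ I' → ∃ m ∈ S, ∀ x ∈ S, x ≠ m → r m x := by
  obtain ⟨-, htot, hirr, htrans⟩ := hr
  intro S hne
  induction hne using Finset.Nonempty.cons_induction with
  | singleton a =>
    intro _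
    exact ⟨a, Finset.mem_singleton_self a, by simp⟩
  | cons a s ha hs ih =>
    intro hsub
    obtain ⟨m, hm, hmax⟩ := ih (fun x hx => hsub (Finset.mem_cons_of_mem hx))
    have haI : a ∈ I' := hsub (Finset.mem_cons_self a s)
    have hmI : m ∈ I' := hsub (Finset.mem_cons_of_mem hm)
    have ham : a ≠ m := fun h => ha (h ▸ hm)
    rcases htot a haI m hmI ham with h | h
    · refine ⟨a, Finset.mem_cons_self a s, ?_⟩
      intro x hx hxa
      rcases Finset.mem_cons.mp hx with rfl | hxs
      · exact absurd rfl hxa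
      · by_cases hxm : x = m
        · exact hxm ▸ h
        · exact htrans _ _ _ h (hmax x hxs hxm)
    · refine ⟨m, Finset.mem_cons_of_mem hm, ?_⟩
      intro x hx hxm
      rcases Finset.mem_cons.mp hx with rfl | hxs
      · exact h
      · exact hmax x hxs hxm

lemma bestIn_spec {I' : Finset I} {r : I → I → Prop} (hr : IsPrefOn I' r)
    {S : Finset I} (hne : S.Nonempty) (hS : S ⊆ I') (d : I) :
    bestIn r S d ∈ S ∧ ∀ x ∈ S, x ≠ bestIn r S d → r (bestIn r S d) x := by
  have h := exists_best hr hne hS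
  unfold bestIn
  split
  · next hh => exact ⟨hh.choose_spec.1, hh.choose_spec.2⟩
  · next hh => exact absurd h hh

lemma pref_asymm {I' : Finset I} {r : I → I → Prop} (hr : IsPrefOn I' r)
    {a b : I} (h1 : r a b) (h2 : r b a) : False :=
  hr.2.2.1 a (hr.2.2.2 a b a h1 h2)

lemma iterate_mem {S : Finset I} {f : I → I} (hf : ∀ i ∈ S, f i ∈ S) :
    ∀ k, ∀ i ∈ S, f^[k] i ∈ S := by
  intro k
  induction k with
  | zero => simp
  | succ n ih =>
    intro i hi
    rw [Function.iterate_succ_apply]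
    exact ih _ (hf i hi)

lemma cyclicAgents_nonempty {fav : I → Finset I → I} {S : Finset I} (hne : S.Nonempty)
    (hf : ∀ i ∈ S, fav i S ∈ S) : (cyclicAgents fav S).Nonempty := by
  classical
  set f := fun j => fav j S with hfdef
  obtain ⟨i0, hi0⟩ := hne
  have hmaps : ∀ k ∈ Finset.range (S.card + 1), f^[k] i0 ∈ S :=
    fun k _ => iterate_mem hf k i0 hi0
  obtain ⟨a, ha, b, hb, hab, heq⟩ :=
    Finset.exists_ne_map_eq_of_card_lt_of_maps_to (by simp) hmaps
  wlog hlt : a < b generalizing a b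
  · exact this b hb a ha hab.symm heq.symm ((hab.lt_or_gt).resolve_left hlt)
  refine ⟨f^[a] i0, ?_⟩
  rw [cyclicAgents, Finset.mem_filter]
  refine ⟨iterate_mem hf a i0 hi0, b - a - 1, ?_, ?_⟩
  · rw [Finset.mem_range]
    have hb' : b ≤ S.card := Nat.lt_succ_iff.mp (Finset.mem_range.mp hb)
    omega
  · have h1 : b - a - 1 + 1 = b - a := by omega
    show f^[b - a - 1 + 1] (f^[a] i0) = f^[a] i0
    rw [h1, ← Function.iterate_add_apply]
    have h2 : b - a + a = b := by omega
    rw [h2]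
    exact heq.symm

lemma cyclicAgents_image {fav : I → Finset I → I} {S : Finset I}
    (hf : ∀ i ∈ S, fav i S ∈ S) :
    (cyclicAgents fav S).image (fun i => fav i S) = cyclicAgents fav S := by
  set f := fun j => fav j S with hfdef
  apply Finset.Subset.antisymm
  · intro j hj
    obtain ⟨i, hi, rfl⟩ := Finset.mem_image.mp hj
    rw [cyclicAgents, Finset.mem_filter] at hi ⊢
    obtain ⟨hiS, k, hk, hcyc⟩ := hi
    refine ⟨hf i hiS, k, hk, ?_⟩
    show f^[k + 1] (f i) = f i
    rw [← Function.iterate_succ_apply, Function.iterate_succ_apply']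
    show f (f^[k+1] i) = f i
    rw [hcyc]
  · intro j hj
    rw [cyclicAgents, Finset.mem_filter] at hj
    obtain ⟨hjS, k, hk, hcyc⟩ := hj
    apply Finset.mem_image.mpr
    refine ⟨f^[k] j, ?_, ?_⟩
    · rw [cyclicAgents, Finset.mem_filter]
      refine ⟨iterate_mem hf k j hjS, k, hk, ?_⟩
      show f^[k + 1] (f^[k] j) = f^[k] j
      have hcomm : f^[k + 1] (f^[k] j) = f^[k] (f^[k + 1] j) := by
        rw [← Function.iterate_add_apply, ← Function.iterate_add_apply, add_comm]
      rw [hcomm, hcyc]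
    · show f (f^[k] j) = j
      rw [← Function.iterate_succ_apply' f k j]
      exact hcyc

/-- `μ` is a hierarchical assignment on `S`: `S` decomposes into successive
rounds, each round being mapped onto itself by `μ`, with every agent of a
round receiving his most preferred object among those still present. -/
inductive Hier (R : I → I → I → Prop) (μ : I → I) : Finset I → Prop where
  | empty : Hier R μ ∅
  | step (S C : Finset I) (hCne : C.Nonempty) (hCS : C ⊆ S) (himg : C.image μ = C)
      (htop : ∀ i ∈ C, ∀ b ∈ S, b ≠ μ i → R i (μ i) b)
      (hrest : Hier R μ (S \ C)) : Hier R μ S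

lemma Hier.congr {R : I → I → I → Prop} {μ ν : I → I} {S : Finset I}
    (h : Hier R μ S) (he : ∀ i ∈ S, ν i = μ i) : Hier R ν S := by
  induction h with
  | empty => exact .empty
  | step S C hCne hCS himg htop hrest ih =>
    refine .step S C hCne hCS ?_ ?_
      (ih fun i hi => he i (Finset.mem_sdiff.mp hi).1)
    · rw [Finset.image_congr (g := μ) fun i hi => he i (hCS hi), himg]
    · intro i hi b hb hbne
      rw [he i (hCS hi)] at hbne ⊢
      exact htop i hi b hb hbne

lemma Hier.image_eq {R : I → I → I → Prop} {μ : I → I} {S : Finset I}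
    (h : Hier R μ S) : S.image μ = S := by
  induction h with
  | empty => simp
  | step S C hCne hCS himg htop hrest ih =>
    conv_lhs => rw [← Finset.union_sdiff_of_subset hCS]
    conv_rhs => rw [← Finset.union_sdiff_of_subset hCS]
    rw [Finset.image_union, himg, ih]

lemma image_eq_self_of_maps {C s : Finset I} {μ : I → I} (hsC : s ⊆ C)
    (hinj : Set.InjOn μ ↑C) (hmaps : ∀ i ∈ s, μ i ∈ s) : s.image μ = s := by
  apply Finset.eq_of_subset_of_card_le
  · intro x hx
    obtain ⟨i, hi, rfl⟩ := Finset.mem_image.mp hx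
    exact hmaps i hi
  · rw [Finset.card_image_of_injOn (hinj.mono (Finset.coe_subset.mpr hsC))]

lemma ttc_hier {I' : Finset I} {R : I → I → I → Prop}
    (hpref : ∀ i ∈ I', IsPrefOn I' (R i)) :
    ∀ S : Finset I, S ⊆ I' → Hier R (TTCaux (fun i T => bestIn (R i) T i) S) S := by
  intro S
  induction S using Finset.strongInduction with
  | _ S ih =>
    intro hSI
    rcases S.eq_empty_or_nonempty with rfl | hne
    · exact Hier.empty
    · set fav := fun (i : I) (T : Finset I) => bestIn (R i) T i with hfav
      have hmaps : ∀ i ∈ S, fav i S ∈ S := fun i hi =>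
        (bestIn_spec (hpref i (hSI hi)) hne hSI i).1
      have hC : (cyclicAgents fav S).Nonempty := cyclicAgents_nonempty hne hmaps
      have hCS : cyclicAgents fav S ⊆ S := cyclicAgents_subset fav S
      have hunfold : TTCaux fav S = fun i =>
          if i ∈ cyclicAgents fav S then fav i S
          else TTCaux fav (S \ cyclicAgents fav S) i := by
        rw [TTCaux, dif_pos hC]
      refine Hier.step S (cyclicAgents fav S) hC hCS ?_ ?_ ?_
      · have he : (cyclicAgents fav S).image (TTCaux fav S) =
            (cyclicAgents fav S).image (fun i => fav i S) :=
          Finset.image_congr fun i hi => by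
            rw [hunfold]
            exact if_pos (Finset.mem_coe.mp hi)
        rw [he]
        exact cyclicAgents_image hmaps
      · intro i hi b hb hbne
        rw [hunfold] at hbne ⊢
        simp only [if_pos hi] at hbne ⊢
        exact (bestIn_spec (hpref i (hSI (hCS hi))) hne hSI i).2 b hb hbne
      · have hrec := ih (S \ cyclicAgents fav S)
          (Finset.sdiff_ssubset hCS hC) (Finset.Subset.trans (Finset.sdiff_subset) hSI)
        refine hrec.congr fun i hi => ?_
        rw [hunfold]
        exact if_neg (Finset.mem_sdiff.mp hi).2

lemma hier_agree_aux {I' : Finset I} {R : I → I → I → Prop}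
    (hpref : ∀ i ∈ I', IsPrefOn I' (R i)) {ν : I → I} :
    ∀ S : Finset I, Hier R ν S → S ⊆ I' → ∀ (μ : I → I) (C : Finset I), C ⊆ S →
      C.image μ = C → (∀ i ∈ C, ∀ b ∈ S, b ≠ μ i → R i (μ i) b) →
      (∀ i ∈ C, ν i = μ i) ∧ Hier R ν (S \ C) := by
  intro S hν
  induction hν with
  | empty =>
    intro hSI μ C hCS himg htop
    refine ⟨fun i hi => absurd (hCS hi) (Finset.notMem_empty i), ?_⟩
    simpa using Hier.empty
  | step S U hUne hUS himgU htopU hrest ih =>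
    intro hSI μ C hCS himg htop
    have hinjC : Set.InjOn μ ↑C :=
      Finset.injOn_of_card_image_eq (by rw [himg])
    have hinjU : Set.InjOn ν ↑U :=
      Finset.injOn_of_card_image_eq (by rw [himgU])
    have hμC : ∀ i ∈ C, μ i ∈ C := by
      intro i hi
      rw [← himg]
      exact Finset.mem_image_of_mem μ hi
    have hνU : ∀ i ∈ U, ν i ∈ U := by
      intro i hi
      rw [← himgU]
      exact Finset.mem_image_of_mem ν hi
    -- agents in C ∩ U get the same object under μ and ν
    have h1 : ∀ i ∈ C ∩ U, ν i = μ i := by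
      intro i hi
      obtain ⟨hiC, hiU⟩ := Finset.mem_inter.mp hi
      by_contra hne
      have hp := hpref i (hSI (hCS hiC))
      exact pref_asymm hp
        (htop i hiC (ν i) (hUS (hνU i hiU)) hne)
        (htopU i hiU (μ i) (hCS (hμC i hiC)) fun h => hne h.symm)
    have hmapsCU : ∀ i ∈ C ∩ U, μ i ∈ C ∩ U := by
      intro i hi
      obtain ⟨hiC, hiU⟩ := Finset.mem_inter.mp hi
      refine Finset.mem_inter.mpr ⟨hμC i hiC, ?_⟩
      rw [← h1 i hi]
      exact hνU i hiU
    have himgCU : (C ∩ U).image μ = C ∩ U :=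
      image_eq_self_of_maps (Finset.inter_subset_left) hinjC hmapsCU
    have himgCUν : (C ∩ U).image ν = C ∩ U := by
      rw [Finset.image_congr (g := μ) fun i hi => h1 i (Finset.mem_coe.mp hi)]
      exact himgCU
    -- μ maps C \ U into C \ U
    have hmapsCdU : ∀ i ∈ C \ U, μ i ∈ C \ U := by
      intro i hi
      obtain ⟨hiC, hiU⟩ := Finset.mem_sdiff.mp hi
      refine Finset.mem_sdiff.mpr ⟨hμC i hiC, fun hμiU => ?_⟩
      have : μ i ∈ C ∩ U := Finset.mem_inter.mpr ⟨hμC i hiC, hμiU⟩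
      rw [← himgCU] at this
      obtain ⟨x, hx, hxe⟩ := Finset.mem_image.mp this
      have hxC : x ∈ C := Finset.mem_inter.mp hx |>.1
      have : x = i := hinjC (Finset.mem_coe.mpr hxC) (Finset.mem_coe.mpr hiC) hxe
      exact hiU (this ▸ (Finset.mem_inter.mp hx).2)
    have himgCdU : (C \ U).image μ = C \ U :=
      image_eq_self_of_maps (Finset.sdiff_subset) hinjC hmapsCdU
    have htopCdU : ∀ i ∈ C \ U, ∀ b ∈ S \ U, b ≠ μ i → R i (μ i) b := by
      intro i hi b hb hbne
      exact htop i (Finset.mem_sdiff.mp hi).1 b (Finset.mem_sdiff.mp hb).1 hbne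
    obtain ⟨h2, hrest2⟩ := ih (Finset.Subset.trans (Finset.sdiff_subset) hSI) μ (C \ U)
      (Finset.sdiff_subset_sdiff hCS (Finset.Subset.refl U)) himgCdU htopCdU
    have hset : (S \ U) \ (C \ U) = S \ (U ∪ C) := by
      ext x
      simp only [Finset.mem_sdiff, Finset.mem_union, not_and, not_not, not_or]
      tauto
    rw [hset] at hrest2
    constructor
    · intro i hi
      by_cases hiU : i ∈ U
      · exact h1 i (Finset.mem_inter.mpr ⟨hi, hiU⟩)
      · exact h2 i (Finset.mem_sdiff.mpr ⟨hi, hiU⟩)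
    · rcases (U \ C).eq_empty_or_nonempty with hUC | hUC
      · have hUsub : U ⊆ C := by
          intro x hx
          by_contra hxC
          exact Finset.eq_empty_iff_forall_notMem.mp hUC x
            (Finset.mem_sdiff.mpr ⟨hx, hxC⟩)
        have : S \ C = S \ (U ∪ C) := by
          rw [Finset.union_eq_right.mpr hUsub]
        rw [this]
        exact hrest2
      · -- ν maps U \ C into U \ C
        have hmapsUdC : ∀ i ∈ U \ C, ν i ∈ U \ C := by
          intro i hi
          obtain ⟨hiU, hiC⟩ := Finset.mem_sdiff.mp hi
          refine Finset.mem_sdiff.mpr ⟨hνU i hiU, fun hνiC => ?_⟩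
          have : ν i ∈ C ∩ U := Finset.mem_inter.mpr ⟨hνiC, hνU i hiU⟩
          rw [← himgCUν] at this
          obtain ⟨x, hx, hxe⟩ := Finset.mem_image.mp this
          have hxU : x ∈ U := (Finset.mem_inter.mp hx).2
          have : x = i := hinjU (Finset.mem_coe.mpr hxU) (Finset.mem_coe.mpr hiU) hxe
          exact hiC (this ▸ (Finset.mem_inter.mp hx).1)
        have himgUdC : (U \ C).image ν = U \ C :=
          image_eq_self_of_maps (Finset.sdiff_subset) hinjU hmapsUdC
        refine Hier.step (S \ C) (U \ C) hUC
          (Finset.sdiff_subset_sdiff hUS (Finset.Subset.refl C)) himgUdC ?_ ?_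
        · intro i hi b hb hbne
          exact htopU i (Finset.mem_sdiff.mp hi).1 b (Finset.mem_sdiff.mp hb).1 hbne
        · have hset2 : (S \ C) \ (U \ C) = S \ (U ∪ C) := by
            ext x
            simp only [Finset.mem_sdiff, Finset.mem_union, not_and, not_not, not_or]
            tauto
          rw [hset2]
          exact hrest2

lemma hier_unique {I' : Finset I} {R : I → I → I → Prop}
    (hpref : ∀ i ∈ I', IsPrefOn I' (R i)) :
    ∀ S : Finset I, S ⊆ I' → ∀ μ ν : I → I, Hier R μ S → Hier R ν S →
      ∀ i ∈ S, μ i = ν i := by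
  intro S
  induction S using Finset.strongInduction with
  | _ S ih =>
    intro hSI μ ν hμ hν i hi
    cases hμ with
    | empty => exact absurd hi (Finset.notMem_empty i)
    | step _ C hCne hCS himg htop hrest =>
      obtain ⟨h1, h2⟩ := hier_agree_aux hpref S hν hSI μ C hCS himg htop
      by_cases hiC : i ∈ C
      · exact (h1 i hiC).symm
      · exact ih (S \ C) (Finset.sdiff_ssubset hCS hCne)
          (Finset.Subset.trans (Finset.sdiff_subset) hSI) μ ν hrest h2 i
          (Finset.mem_sdiff.mpr ⟨hi, hiC⟩)

lemma hier_restrict {R : I → I → I → Prop} {μ : I → I} {J : Finset I}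
    (hclose : ∀ i ∈ J, μ i ∈ J) :
    ∀ S : Finset I, Hier R μ S → Hier (fun j => restr J (R j)) μ (S ∩ J) := by
  intro S h
  induction h with
  | empty => simpa using Hier.empty
  | step S C hCne hCS himg htop hrest ih =>
    have hinjC : Set.InjOn μ ↑C :=
      Finset.injOn_of_card_image_eq (by rw [himg])
    have hmaps : ∀ i ∈ C ∩ J, μ i ∈ C ∩ J := by
      intro i hi
      obtain ⟨hiC, hiJ⟩ := Finset.mem_inter.mp hi
      refine Finset.mem_inter.mpr ⟨?_, hclose i hiJ⟩
      rw [← himg]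
      exact Finset.mem_image_of_mem μ hiC
    have hset : (S ∩ J) \ (C ∩ J) = (S \ C) ∩ J := by
      ext x
      simp only [Finset.mem_sdiff, Finset.mem_inter, not_and]
      tauto
    rcases (C ∩ J).eq_empty_or_nonempty with hCJ | hCJ
    · have : S ∩ J = (S \ C) ∩ J := by
        rw [← hset, hCJ, Finset.sdiff_empty]
      rw [this]
      exact ih
    · refine Hier.step _ (C ∩ J) hCJ
        (Finset.inter_subset_inter hCS (Finset.Subset.refl J)) ?_ ?_ ?_
      · exact image_eq_self_of_maps (Finset.inter_subset_left) hinjC hmaps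
      · intro i hi b hb hbne
        obtain ⟨hiC, hiJ⟩ := Finset.mem_inter.mp hi
        obtain ⟨hbS, hbJ⟩ := Finset.mem_inter.mp hb
        exact ⟨htop i hiC b hbS hbne, (Finset.mem_inter.mp (hmaps i hi)).2, hbJ⟩
      · rw [hset]
        exact ih

/-- On any consistent preference domain in the
variable-population housing market model, the TTC mechanism is consistent. -/
theorem stmt_8 {I : Type*} [DecidableEq I] [Fintype I] (hn : 3 ≤ Fintype.card I)
    (D : Domain I) (hDpref : ∀ I' : Finset I, ∀ r ∈ D I', IsPrefOn I' r)
    (hDcons : ConsistentDomain D) :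
    ConsistentMechV D (fun I' R => TTCv I' R) := by
  intro I' hI'ne R hD J hJI hJne him i hiJ
  have hpref : ∀ i ∈ I', IsPrefOn I' (R i) := fun i hi => hDpref I' (R i) (hD i hi)
  have hμ : Hier R (TTCv I' R) I' := ttc_hier hpref I' (Finset.Subset.refl I')
  have himgI : I'.image (TTCv I' R) = I' := hμ.image_eq
  have hinj : Set.InjOn (TTCv I' R) ↑I' :=
    Finset.injOn_of_card_image_eq (by rw [himgI])
  have hclose : ∀ j ∈ J, TTCv I' R j ∈ J := by
    intro j hj
    have hjI : j ∈ I' := hJI hj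
    have h1 : TTCv I' R j ∈ I' := by
      have h0 := Finset.mem_image_of_mem (TTCv I' R) hjI
      rwa [himgI] at h0
    by_contra hnot
    have hmem : TTCv I' R j ∈ I' \ J := Finset.mem_sdiff.mpr ⟨h1, hnot⟩
    rw [← him] at hmem
    obtain ⟨x, hx, hxe⟩ := Finset.mem_image.mp hmem
    obtain ⟨hxI, hxJ⟩ := Finset.mem_sdiff.mp hx
    have : x = j := hinj (Finset.mem_coe.mpr hxI) (Finset.mem_coe.mpr hjI) hxe
    exact hxJ (this ▸ hj)
  have hprefJ : ∀ j ∈ J, IsPrefOn J (restr J (R j)) := fun j hj =>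
    hDpref J _ (hDcons I' (R j) (hD j (hJI hj)) J hJI hJne)
  have hν : Hier (fun j => restr J (R j)) (TTCv J (fun j => restr J (R j))) J :=
    ttc_hier hprefJ J (Finset.Subset.refl J)
  have hμJ : Hier (fun j => restr J (R j)) (TTCv I' R) J := by
    have h := hier_restrict hclose I' hμ
    rwa [Finset.inter_eq_right.mpr hJI] at h
  exact hier_unique hprefJ J (Finset.Subset.refl J) _ _ hν hμJ i hiJ
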